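/- arXiv:1012.4152 — 2 statements merged into one kernel-verified Lean document; each statement's English description precedes it below -/
import Mathlib

section
/- If G is a K_{2,3}-saturated graph on n vertices that has a vertex of degree 1, then G has at least 2n − 3 edges. -/
open SimpleGraph

/-- `G` contains a subgraph isomorphic to the complete bipartite graph `K_{2,3}`. -/
def HasK23 {V : Type*} (G : SimpleGraph V) : Prop :=
  ∃ f : (Fin 2 ⊕ Fin 3) ↪ V,
    ∀ a b, (completeBipartiteGraph (Fin 2) (Fin 3)).Adj a b → G.Adj (f a) (f b)

/-- `G` is `K_{2,3}`-saturated: `K_{2,3}`-free, but adding any edge between two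
non-adjacent vertices creates a `K_{2,3}`. -/
def K23Saturated {V : Type*} (G : SimpleGraph V) : Prop :=
  ¬ HasK23 G ∧ ∀ u v : V, u ≠ v → ¬ G.Adj u v →
    HasK23 (G ⊔ SimpleGraph.fromEdgeSet {s(u, v)})

/-! If `v` has the single neighbour `u` and `w ∉ {u, v}`, the `K_{2,3}` created by adding `vw`
must contain `v` (as `G` has none), and `v` then has only the neighbours `u` and `w`. So `v` lies on
the side of size three, `{u, w}` is the side of size two, and `u`, `w` have two common neighbours
in `G`. Double counting with `T = N(u)` then gives
`∑_{t ∈ T} deg t = ∑_x |N(x) ∩ T| ≥ |T| + 2(n - 2)` and `∑_{x ∉ T} deg x ≥ deg u + 2(n - 1 - |T|)`,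
so the degree sum is at least `4n - 6`. -/

open Finset

namespace SimpleGraph

variable {V : Type*}

lemma adj_of_sup_edge_adj {G : SimpleGraph V} {v w x y : V} (h : (G ⊔ edge v w).Adj x y)
    (hx : x ≠ v) (hy : y ≠ v) : G.Adj x y := by
  grind

lemma neighborSet_sup_edge_subset (G : SimpleGraph V) (v w : V) :
    (G ⊔ edge v w).neighborSet v ⊆ insert w (G.neighborSet v) := by
  intro y
  grind [mem_neighborSet]

open Sum in
lemma exists_commonNeighbors_of_K23_embedding {H : SimpleGraph V} (f : Fin 2 ⊕ Fin 3 ↪ V)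
    (hf : ∀ a b, (completeBipartiteGraph (Fin 2) (Fin 3)).Adj a b → H.Adj (f a) (f b))
    {x : Fin 2 ⊕ Fin 3} {p q : V} (hx : H.neighborSet (f x) ⊆ {p, q}) :
    ∃ a b, a ≠ b ∧ a ≠ f x ∧ b ≠ f x ∧ a ∈ H.commonNeighbors p q ∧ b ∈ H.commonNeighbors p q := by
  classical
  have hpq : #({p, q} : Finset V) ≤ 2 := card_le_two
  rcases x with i | j
  · have hsub : univ.map (Function.Embedding.inr.trans f) ⊆ {p, q} := by
      intro y hy
      obtain ⟨j, -, rfl⟩ := mem_map.mp hy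
      simpa using hx (hf (inl i) (inr j) (by simp))
    have := card_le_card hsub
    simp only [card_map, card_univ, Fintype.card_fin] at this
    omega
  · have hsub : univ.map (Function.Embedding.inl.trans f) ⊆ {p, q} := by
      intro y hy
      obtain ⟨i, -, rfl⟩ := mem_map.mp hy
      simpa using hx (hf (inr j) (inl i) (by simp))
    have heq := eq_of_subset_of_card_le hsub (by simpa using hpq)
    have hside : ∀ y ∈ ({p, q} : Finset V), ∀ k, H.Adj y (f (inr k)) := by
      intro y hy k
      obtain ⟨i, -, rfl⟩ := mem_map.mp (heq ▸ hy)
      exact hf _ _ (by simp)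
    obtain ⟨j₁, j₂, h12, h1, h2⟩ :=
      (by decide : ∀ j : Fin 3, ∃ j₁ j₂ : Fin 3, j₁ ≠ j₂ ∧ j₁ ≠ j ∧ j₂ ≠ j) j
    refine ⟨f (inr j₁), f (inr j₂), by simpa using h12, by simpa using h1, by simpa using h2,
      ?_, ?_⟩ <;> simp [mem_commonNeighbors, hside]

lemma K23Saturated.exists_commonNeighbors {G : SimpleGraph V} (hG : K23Saturated G) {u v w : V}
    (hv : G.neighborSet v = {u}) (hwu : w ≠ u) (hwv : w ≠ v) :
    ∃ a b, a ≠ b ∧ a ∈ G.commonNeighbors w u ∧ b ∈ G.commonNeighbors w u := by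
  have hvu : G.Adj v u := by simp [← mem_neighborSet, hv]
  have hvw : ¬ G.Adj v w := by simpa [← mem_neighborSet, hv]
  obtain ⟨f, hf⟩ := hG.2 v w hwv.symm hvw
  obtain ⟨x, hx⟩ : ∃ x, f x = v := by
    by_contra! h
    exact hG.1 ⟨f, fun a b hab => adj_of_sup_edge_adj (hf a b hab) (h a) (h b)⟩
  have hN : (G ⊔ edge v w).neighborSet (f x) ⊆ {w, u} := by
    rw [hx, ← hv]
    exact neighborSet_sup_edge_subset G v w
  obtain ⟨a, b, hab, hav, hbv, ha, hb⟩ := exists_commonNeighbors_of_K23_embedding f hf hN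
  rw [hx] at hav hbv
  have hu : u ≠ v := hvu.ne.symm
  exact ⟨a, b, hab, ⟨adj_of_sup_edge_adj ha.1 hwv hav, adj_of_sup_edge_adj ha.2 hu hav⟩,
    ⟨adj_of_sup_edge_adj hb.1 hwv hbv, adj_of_sup_edge_adj hb.2 hu hbv⟩⟩

section Counting

variable [Fintype V] [DecidableEq V] {G : SimpleGraph V} [DecidableRel G.Adj]

lemma sum_degree_eq_sum_card_neighborFinset_inter (s : Finset V) :
    ∑ a ∈ s, G.degree a = ∑ x, #(G.neighborFinset x ∩ s) := by
  have := sum_card_bipartiteAbove_eq_sum_card_bipartiteBelow (s := s) (t := univ) (r := G.Adj)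
  convert this using 2 with a - x -
  · simp [bipartiteAbove, ← card_neighborFinset_eq_degree, neighborFinset_def]
  · congr 1
    ext
    simp [bipartiteBelow, adj_comm, and_comm]

lemma four_mul_card_sub_six_le_sum_degrees {u v : V} (huv : G.Adj u v)
    (hcommon : ∀ w, w ≠ u → w ≠ v → 2 ≤ #(G.neighborFinset w ∩ G.neighborFinset u)) :
    4 * Fintype.card V - 6 ≤ ∑ x, G.degree x := by
  set T := G.neighborFinset u
  set R := (univ.erase u).erase v
  have hR : #R = Fintype.card V - 2 := by
    rw [card_erase_of_mem (by simpa using huv.ne.symm), card_erase_of_mem (mem_univ u), card_univ,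
      Nat.sub_sub]
  have hsplit : ∑ x, G.degree x = ∑ x, #(G.neighborFinset x ∩ T) + ∑ x ∈ Tᶜ, G.degree x := by
    rw [← sum_add_sum_compl T, sum_degree_eq_sum_card_neighborFinset_inter]
  have hinner : #T + 2 * #R ≤ ∑ x, #(G.neighborFinset x ∩ T) := by
    have hR2 : 2 * #R ≤ ∑ x ∈ R, #(G.neighborFinset x ∩ T) := by
      rw [mul_comm, ← smul_eq_mul]
      refine card_nsmul_le_sum _ _ _ fun x hx => ?_
      simp only [R, mem_erase] at hx
      exact hcommon x hx.2.1 hx.1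
    calc #T + 2 * #R ≤ #(G.neighborFinset u ∩ T) + ∑ x ∈ R, #(G.neighborFinset x ∩ T) := by
          rw [inter_self]; gcongr
      _ ≤ #(G.neighborFinset u ∩ T) + ∑ x ∈ univ.erase u, #(G.neighborFinset x ∩ T) := by
          gcongr; exact erase_subset _ _
      _ = ∑ x, #(G.neighborFinset x ∩ T) :=
          add_sum_erase _ (fun x => #(G.neighborFinset x ∩ T)) (mem_univ u)
  have houter : #T + 2 * (#Tᶜ - 1) ≤ ∑ x ∈ Tᶜ, G.degree x := by
    have hu : u ∈ Tᶜ := by simp [T]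
    have hrest : 2 * #(Tᶜ.erase u) ≤ ∑ x ∈ Tᶜ.erase u, G.degree x := by
      rw [mul_comm, ← smul_eq_mul]
      refine card_nsmul_le_sum _ _ _ fun x hx => ?_
      obtain ⟨hxu, hxT⟩ := mem_erase.mp hx
      have hxv : x ≠ v := by rintro rfl; simp [T, huv] at hxT
      calc 2 ≤ #(G.neighborFinset x ∩ T) := hcommon x hxu hxv
        _ ≤ G.degree x := card_le_card inter_subset_left
    rw [← add_sum_erase _ _ hu, ← card_erase_of_mem hu, ← card_neighborFinset_eq_degree]
    gcongr
  have hTc : #T + #Tᶜ = Fintype.card V := card_add_card_compl T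
  have hT : 0 < #Tᶜ := card_pos.mpr ⟨u, by simp [T]⟩
  omega

end Counting

end SimpleGraph

theorem sat_K23_min_degree_one (n : ℕ) (G : SimpleGraph (Fin n))
    (hG : K23Saturated G) (hdeg : ∃ v, (G.neighborSet v).ncard = 1) :
    2 * n - 3 ≤ G.edgeSet.ncard := by
  classical
  obtain ⟨v, hv⟩ := hdeg
  obtain ⟨u, hu⟩ := Set.ncard_eq_one.mp hv
  have huv : G.Adj u v := G.adj_symm (by simp [← mem_neighborSet, hu])
  have hcommon : ∀ w, w ≠ u → w ≠ v → 2 ≤ #(G.neighborFinset w ∩ G.neighborFinset u) := by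
    intro w hwu hwv
    obtain ⟨a, b, hab, ha, hb⟩ := hG.exists_commonNeighbors hu hwu hwv
    exact one_lt_card.mpr ⟨a, by simpa [mem_commonNeighbors] using ha, b,
      by simpa [mem_commonNeighbors] using hb, hab⟩
  have hsum := four_mul_card_sub_six_le_sum_degrees huv hcommon
  rw [sum_degrees_eq_twice_card_edges, Fintype.card_fin] at hsum
  rw [← coe_edgeFinset, Set.ncard_coe_finset]
  omega
end

section
/- Every graph of the form K_1 * (P_4 + H), the join of a single vertex with the disjoint union of a path on 4 vertices and a 2-regular C_4-free graph H on n − 5 vertices, is K_{2,3}-saturated with exactly 2n − 3 edges. -/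
/-!
A `K_{2,3}` is a pair of vertices with three common neighbours. In the cone over
`F = P₄ + H`, the apex and a vertex `v` have exactly the `F`-neighbours of `v` in common, at
most two since `F` has maximum degree 2; two vertices of `P₄`, or two of `H`, share the apex and
at most one more vertex since neither contains a 4-cycle; a vertex of `P₄` and one of `H` share
only the apex. Conversely, a new edge `ab` inside `F` creates the `K_{2,3}` with sides
`{apex, a}` and `{b} ∪ N(a)` as soon as `a` has two neighbours. This covers every non-edge
except the two ends of `P₄`, where the new edge closes `P₄` into a 4-cycle `a x y b`, and
`{a, y}`, `{apex, x, b}` span a `K_{2,3}`. The cone has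
`|V(F)| + |E(F)| = (n - 1) + (3 + (n - 5))` edges.
-/

open SimpleGraph

/-- The join `K₁ * (P₄ + H)`: an apex vertex `Sum.inl ()` joined to the disjoint
union of a path on 4 vertices and a graph `H`. -/
def apexPlusPathFour {m : ℕ} (H : SimpleGraph (Fin m)) :
    SimpleGraph (Unit ⊕ Fin 4 ⊕ Fin m) :=
  SimpleGraph.fromRel (fun x y =>
    x = Sum.inl () ∨
    (∃ a b : Fin 4, x = Sum.inr (Sum.inl a) ∧ y = Sum.inr (Sum.inl b) ∧
      (SimpleGraph.pathGraph 4).Adj a b) ∨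
    (∃ a b : Fin m, x = Sum.inr (Sum.inr a) ∧ y = Sum.inr (Sum.inr b) ∧ H.Adj a b))

namespace SimpleGraph

variable {V W : Type*}

lemma hasK23_of_adj {G : SimpleGraph V} {p q a b c : V} (hpq : p ≠ q)
    (hab : a ≠ b) (hac : a ≠ c) (hbc : b ≠ c)
    (hpa : G.Adj p a) (hpb : G.Adj p b) (hpc : G.Adj p c)
    (hqa : G.Adj q a) (hqb : G.Adj q b) (hqc : G.Adj q c) : HasK23 G := by
  let f : Fin 2 ⊕ Fin 3 → V := Sum.elim ![p, q] ![a, b, c]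
  have hf : Function.Injective f := by
    rintro (i | i) (j | j) h <;> fin_cases i <;> fin_cases j <;>
      simp_all [f, hpa.ne, hpb.ne, hpc.ne, hqa.ne, hqb.ne, hqc.ne, Ne.symm]
  have adj (i : Fin 2) (j : Fin 3) : G.Adj (f (.inl i)) (f (.inr j)) := by
    fin_cases i <;> fin_cases j <;> assumption
  refine ⟨⟨f, hf⟩, ?_⟩
  rintro (i | i) (j | j) h <;> simp at h
  exacts [adj i j, (adj j i).symm]

lemma hasK23_iff_two_lt_ncard_commonNeighbors [Finite V] {G : SimpleGraph V} :
    HasK23 G ↔ ∃ p q, p ≠ q ∧ 2 < (G.commonNeighbors p q).ncard := by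
  constructor
  · rintro ⟨f, hf⟩
    have adj (j : Fin 3) : f (.inr j) ∈ G.commonNeighbors (f (.inl 0)) (f (.inl 1)) :=
      ⟨hf _ _ (by simp), hf _ _ (by simp)⟩
    exact ⟨_, _, f.injective.ne (by simp), (Set.two_lt_ncard_iff).mpr
      ⟨_, _, _, adj 0, adj 1, adj 2, f.injective.ne (by simp), f.injective.ne (by simp),
        f.injective.ne (by simp)⟩⟩
  · rintro ⟨p, q, hpq, h⟩
    obtain ⟨a, b, c, ⟨hpa, hqa⟩, ⟨hpb, hqb⟩, ⟨hpc, hqc⟩, hab, hac, hbc⟩ :=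
      (Set.two_lt_ncard_iff).mp h
    exact hasK23_of_adj hpq hab hac hbc hpa hpb hpc hqa hqb hqc

lemma two_mul_ncard_edgeSet [Fintype V] (G : SimpleGraph V) :
    2 * G.edgeSet.ncard = ∑ v, (G.neighborSet v).ncard := by
  classical
  rw [← coe_edgeFinset, Set.ncard_coe_finset, ← sum_degrees_eq_twice_card_edges]
  simp only [← card_neighborSet_eq_degree, ← Nat.card_coe_set_eq, Nat.card_eq_fintype_card]

lemma two_mul_ncard_edgeSet_of_ncard_neighborSet_eq [Finite V] {G : SimpleGraph V} {d : ℕ}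
    (hd : ∀ v, (G.neighborSet v).ncard = d) : 2 * G.edgeSet.ncard = Nat.card V * d := by
  have := Fintype.ofFinite V
  simp [two_mul_ncard_edgeSet, hd]

lemma ncard_commonNeighbors_le_one_of_noFourCycle [Finite V] {G : SimpleGraph V}
    (hC4 : ∀ a b c d, a ≠ c → b ≠ d → G.Adj a b → G.Adj b c → G.Adj c d → G.Adj d a → False)
    {a c : V} (hac : a ≠ c) : (G.commonNeighbors a c).ncard ≤ 1 := by
  rw [Set.ncard_le_one_iff]
  rintro b d ⟨hab, hcb⟩ ⟨had, hcd⟩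
  by_contra hbd
  exact hC4 a b c d hac hbd hab hcb.symm hcd had.symm

instance (n : ℕ) : DecidableRel (pathGraph n).Adj := fun _ _ => decidable_of_iff' _ pathGraph_adj

lemma ncard_edgeSet_pathGraph_four : (pathGraph 4).edgeSet.ncard = 3 := by
  rw [← coe_edgeFinset, Set.ncard_coe_finset]
  decide

lemma ncard_neighborSet_pathGraph_le {n : ℕ} (a : Fin n) :
    ((pathGraph n).neighborSet a).ncard ≤ 2 := by
  by_contra! h
  obtain ⟨x, y, z, hx, hy, hz, hxy, hxz, hyz⟩ := (Set.two_lt_ncard_iff).mp h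
  simp only [mem_neighborSet, pathGraph_adj, ne_eq, Fin.ext_iff] at hx hy hz hxy hxz hyz
  omega

lemma ncard_commonNeighbors_pathGraph_le {n : ℕ} {a b : Fin n} (hab : a ≠ b) :
    ((pathGraph n).commonNeighbors a b).ncard ≤ 1 := by
  rw [Set.ncard_le_one_iff]
  intro x y hx hy
  simp only [mem_commonNeighbors, pathGraph_adj] at hx hy
  rw [ne_eq, Fin.ext_iff] at hab
  ext
  omega

section sum

variable {G : SimpleGraph V} {H : SimpleGraph W}

lemma ncard_edgeSet_sum [Finite V] [Finite W] :
    (G ⊕g H).edgeSet.ncard = G.edgeSet.ncard + H.edgeSet.ncard := by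
  simp only [← Nat.card_coe_set_eq]
  rw [Nat.card_congr edgeSetSumEquiv, Nat.card_sum]

lemma commonNeighbors_sum_inl_inl (v v' : V) :
    (G ⊕g H).commonNeighbors (.inl v) (.inl v') = Sum.inl '' G.commonNeighbors v v' := by
  simp only [commonNeighbors_eq, neighborSet_sum_inl, Set.image_inter Sum.inl_injective]

lemma commonNeighbors_sum_inr_inr (w w' : W) :
    (G ⊕g H).commonNeighbors (.inr w) (.inr w') = Sum.inr '' H.commonNeighbors w w' := by
  simp only [commonNeighbors_eq, neighborSet_sum_inr, Set.image_inter Sum.inr_injective]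

lemma commonNeighbors_sum_inl_inr (v : V) (w : W) :
    (G ⊕g H).commonNeighbors (.inl v) (.inr w) = ∅ := by
  ext (_ | _) <;> simp [mem_commonNeighbors]

lemma ncard_neighborSet_sum_le {k : ℕ} (hG : ∀ v, (G.neighborSet v).ncard ≤ k)
    (hH : ∀ w, (H.neighborSet w).ncard ≤ k) : ∀ x, ((G ⊕g H).neighborSet x).ncard ≤ k
  | .inl v => by
    rw [neighborSet_sum_inl, Set.ncard_image_of_injective _ Sum.inl_injective]
    exact hG v
  | .inr w => by
    rw [neighborSet_sum_inr, Set.ncard_image_of_injective _ Sum.inr_injective]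
    exact hH w

lemma ncard_commonNeighbors_sum_le {k : ℕ}
    (hG : ∀ v v', v ≠ v' → (G.commonNeighbors v v').ncard ≤ k)
    (hH : ∀ w w', w ≠ w' → (H.commonNeighbors w w').ncard ≤ k) :
    ∀ x y, x ≠ y → ((G ⊕g H).commonNeighbors x y).ncard ≤ k
  | .inl v, .inl v', h => by
    rw [commonNeighbors_sum_inl_inl, Set.ncard_image_of_injective _ Sum.inl_injective]
    exact hG v v' (by simpa using h)
  | .inr w, .inr w', h => by
    rw [commonNeighbors_sum_inr_inr, Set.ncard_image_of_injective _ Sum.inr_injective]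
    exact hH w w' (by simpa using h)
  | .inl v, .inr w, _ => by simp [commonNeighbors_sum_inl_inr]
  | .inr w, .inl v, _ => by simp [commonNeighbors_symm, commonNeighbors_sum_inl_inr]

end sum

/-- The join `K₁ * F`, with apex `Sum.inl ()`. -/
def cone (F : SimpleGraph W) : SimpleGraph (Unit ⊕ W) where
  Adj
    | .inl _, .inl _ => False
    | .inl _, .inr _ => True
    | .inr _, .inl _ => True
    | .inr a, .inr b => F.Adj a b
  symm.symm
    | .inl _, .inl _ | .inl _, .inr _ | .inr _, .inl _ => id
    | .inr _, .inr _ => F.adj_symm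
  loopless.irrefl
    | .inl _ => id
    | .inr _ => F.irrefl

section cone

variable {F : SimpleGraph W}

@[simp] lemma cone_adj_inl_inl {u v : Unit} : ¬(cone F).Adj (.inl u) (.inl v) := id
@[simp] lemma cone_adj_inl_inr {u : Unit} {b : W} : (cone F).Adj (.inl u) (.inr b) := trivial
@[simp] lemma cone_adj_inr_inl {a : W} {u : Unit} : (cone F).Adj (.inr a) (.inl u) := trivial
@[simp] lemma cone_adj_inr_inr {a b : W} : (cone F).Adj (.inr a) (.inr b) ↔ F.Adj a b := .rfl

lemma neighborSet_cone_inl (u : Unit) : (cone F).neighborSet (.inl u) = Set.range Sum.inr := by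
  ext (_ | b) <;> simp

lemma neighborSet_cone_inr (a : W) :
    (cone F).neighborSet (.inr a) = insert (.inl ()) (Sum.inr '' F.neighborSet a) := by
  ext (_ | b) <;> simp

lemma commonNeighbors_cone_inl_inr (u : Unit) (b : W) :
    (cone F).commonNeighbors (.inl u) (.inr b) = Sum.inr '' F.neighborSet b := by
  ext (_ | c) <;> simp [mem_commonNeighbors]

lemma commonNeighbors_cone_inr_inr (a b : W) :
    (cone F).commonNeighbors (.inr a) (.inr b) =
      insert (.inl ()) (Sum.inr '' F.commonNeighbors a b) := by
  ext (_ | c) <;> simp [mem_commonNeighbors]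

lemma ncard_edgeSet_cone [Finite W] :
    (cone F).edgeSet.ncard = Nat.card W + F.edgeSet.ncard := by
  have := Fintype.ofFinite W
  have hcone := two_mul_ncard_edgeSet (cone F)
  have hF := two_mul_ncard_edgeSet F
  have hinr (w : W) : ((cone F).neighborSet (.inr w)).ncard = (F.neighborSet w).ncard + 1 := by
    rw [neighborSet_cone_inr, Set.ncard_insert_of_notMem (by simp),
      Set.ncard_image_of_injective _ Sum.inr_injective]
  simp only [Fintype.sum_sum_type, Nat.card_unique, one_mul, ← hF, neighborSet_cone_inl,
    Set.ncard_range_of_injective Sum.inr_injective, hinr, Finset.sum_add_distrib,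
    Finset.sum_const, Finset.card_univ, smul_eq_mul, mul_one, ← Nat.card_eq_fintype_card] at hcone
  omega

lemma not_hasK23_cone [Finite W] (hdeg : ∀ a, (F.neighborSet a).ncard ≤ 2)
    (hcommon : ∀ a b, a ≠ b → (F.commonNeighbors a b).ncard ≤ 1) : ¬HasK23 (cone F) := by
  rw [hasK23_iff_two_lt_ncard_commonNeighbors]
  rintro ⟨⟨⟩ | a, ⟨⟩ | b, hab, h⟩
  · exact hab rfl
  · rw [commonNeighbors_cone_inl_inr, Set.ncard_image_of_injective _ Sum.inr_injective] at h
    exact (hdeg b).not_gt h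
  · rw [commonNeighbors_symm, commonNeighbors_cone_inl_inr,
      Set.ncard_image_of_injective _ Sum.inr_injective] at h
    exact (hdeg a).not_gt h
  · rw [commonNeighbors_cone_inr_inr] at h
    have := Set.ncard_insert_le (Sum.inl () : Unit ⊕ W) (Sum.inr '' F.commonNeighbors a b)
    rw [Set.ncard_image_of_injective _ Sum.inr_injective] at this
    have := hcommon a b (by simpa using hab)
    omega

lemma hasK23_cone_sup_edge_of_adj_adj {a b x y : W} (hab : a ≠ b) (hnadj : ¬F.Adj a b)
    (hx : F.Adj a x) (hy : F.Adj a y) (hxy : x ≠ y) :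
    HasK23 (cone F ⊔ fromEdgeSet {s(.inr a, .inr b)}) := by
  have hxb : x ≠ b := by rintro rfl; exact hnadj hx
  have hyb : y ≠ b := by rintro rfl; exact hnadj hy
  refine hasK23_of_adj (p := .inl ()) (q := .inr a) (a := .inr x) (b := .inr y) (c := .inr b)
    ?_ ?_ ?_ ?_ ?_ ?_ ?_ ?_ ?_ ?_ <;> simp [*]

lemma hasK23_cone_sup_edge_of_one_lt_ncard [Finite W] {a b : W} (hab : a ≠ b)
    (hnadj : ¬F.Adj a b) (ha : 1 < (F.neighborSet a).ncard) :
    HasK23 (cone F ⊔ fromEdgeSet {s(.inr a, .inr b)}) := by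
  obtain ⟨x, y, hx, hy, hxy⟩ := (Set.one_lt_ncard_iff).mp ha
  exact hasK23_cone_sup_edge_of_adj_adj hab hnadj hx hy hxy

lemma hasK23_cone_sup_edge_of_path {a b x y : W} (hab : a ≠ b) (hnadj : ¬F.Adj a b)
    (hax : F.Adj a x) (hxy : F.Adj x y) (hyb : F.Adj y b) (hay : a ≠ y) :
    HasK23 (cone F ⊔ fromEdgeSet {s(.inr a, .inr b)}) := by
  have hxb : x ≠ b := by rintro rfl; exact hnadj hax
  refine hasK23_of_adj (p := .inr a) (q := .inr y) (a := .inl ()) (b := .inr x) (c := .inr b)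
    ?_ ?_ ?_ ?_ ?_ ?_ ?_ ?_ ?_ ?_ <;> simp [*, hxy.symm]

lemma k23Saturated_cone [Finite W] (hdeg : ∀ a, (F.neighborSet a).ncard ≤ 2)
    (hcommon : ∀ a b, a ≠ b → (F.commonNeighbors a b).ncard ≤ 1)
    (hsat : ∀ a b, a ≠ b → ¬F.Adj a b → HasK23 (cone F ⊔ fromEdgeSet {s(.inr a, .inr b)})) :
    K23Saturated (cone F) := by
  refine ⟨not_hasK23_cone hdeg hcommon, ?_⟩
  rintro (⟨⟩ | a) (⟨⟩ | b) hab hnadj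
  · exact absurd rfl hab
  · exact absurd cone_adj_inl_inr hnadj
  · exact absurd cone_adj_inr_inl hnadj
  · exact hsat a b (by simpa using hab) (by simpa using hnadj)

end cone

end SimpleGraph

open SimpleGraph

section apexPlusPathFour

variable {m : ℕ} {H : SimpleGraph (Fin m)}

lemma apexPlusPathFour_eq_cone : apexPlusPathFour H = cone (pathGraph 4 ⊕g H) := by
  ext (_ | _ | a) (_ | _ | b) <;> simp [apexPlusPathFour, adj_comm] <;> exact Adj.ne

lemma hasK23_cone_pathGraph_four_sum_sup_edge_inl {a b : Fin 4} (hab : a ≠ b)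
    (hnadj : ¬(pathGraph 4).Adj a b) :
    HasK23 (cone (pathGraph 4 ⊕g H) ⊔ fromEdgeSet {s(.inr (.inl a), .inr (.inl b))}) := by
  wlog hlt : a < b generalizing a b
  · rw [Sym2.eq_swap]
    exact this hab.symm (fun h => hnadj h.symm) (lt_of_le_of_ne (not_lt.mp hlt) hab.symm)
  -- the remaining non-edges are `02`, `03` and `13`
  fin_cases a <;> fin_cases b <;> simp [pathGraph_adj] at hab hnadj hlt
  · rw [Sym2.eq_swap]
    refine hasK23_cone_sup_edge_of_adj_adj (x := .inl 1) (y := .inl 3) ?_ ?_ ?_ ?_ ?_ <;>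
      simp [pathGraph_adj]
  · refine hasK23_cone_sup_edge_of_path (x := .inl 1) (y := .inl 2) ?_ ?_ ?_ ?_ ?_ ?_ <;>
      simp [pathGraph_adj]
  · refine hasK23_cone_sup_edge_of_adj_adj (x := .inl 0) (y := .inl 2) ?_ ?_ ?_ ?_ ?_ <;>
      simp [pathGraph_adj]

lemma hasK23_cone_pathGraph_four_sum_sup_edge (hreg : ∀ v, (H.neighborSet v).ncard = 2)
    (x y : Fin 4 ⊕ Fin m) (hxy : x ≠ y) (hnadj : ¬(pathGraph 4 ⊕g H).Adj x y) :
    HasK23 (cone (pathGraph 4 ⊕g H) ⊔ fromEdgeSet {s(.inr x, .inr y)}) := by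
  have hH (w : Fin m) : 1 < ((pathGraph 4 ⊕g H).neighborSet (.inr w)).ncard := by
    rw [neighborSet_sum_inr, Set.ncard_image_of_injective _ Sum.inr_injective, hreg w]
    norm_num
  rcases x with a | a
  · rcases y with b | b
    · exact hasK23_cone_pathGraph_four_sum_sup_edge_inl (by simpa using hxy) (by simpa using hnadj)
    · rw [Sym2.eq_swap]
      exact hasK23_cone_sup_edge_of_one_lt_ncard hxy.symm (fun h => hnadj h.symm) (hH b)
  · exact hasK23_cone_sup_edge_of_one_lt_ncard hxy hnadj (hH a)

end apexPlusPathFour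

theorem apexPlusPathFour_saturated (n : ℕ) (hn : 8 ≤ n)
    (H : SimpleGraph (Fin (n - 5)))
    (hreg : ∀ v, (H.neighborSet v).ncard = 2)
    (hC4 : ∀ a b c d : Fin (n - 5), a ≠ c → b ≠ d →
      H.Adj a b → H.Adj b c → H.Adj c d → H.Adj d a → False) :
    K23Saturated (apexPlusPathFour H) ∧
      (apexPlusPathFour H).edgeSet.ncard = 2 * n - 3 := by
  have hdeg := ncard_neighborSet_sum_le (ncard_neighborSet_pathGraph_le (n := 4))
    (fun v => (hreg v).le)
  have hcommon := ncard_commonNeighbors_sum_le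
    (fun _ _ => ncard_commonNeighbors_pathGraph_le (n := 4))
    (fun _ _ => ncard_commonNeighbors_le_one_of_noFourCycle hC4)
  have hedgesH := two_mul_ncard_edgeSet_of_ncard_neighborSet_eq hreg
  rw [Nat.card_fin] at hedgesH
  rw [apexPlusPathFour_eq_cone]
  refine ⟨k23Saturated_cone hdeg hcommon (hasK23_cone_pathGraph_four_sum_sup_edge hreg), ?_⟩
  rw [ncard_edgeSet_cone, ncard_edgeSet_sum, ncard_edgeSet_pathGraph_four, Nat.card_sum,
    Nat.card_fin, Nat.card_fin]
  omega
end
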